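/- arXiv:math/0006136 — 5 statements merged into one kernel-verified Lean document; each statement's English description precedes it below -/
import Mathlib

section
/- Let ρ : ℂⁿ → ℝ be twice continuously differentiable (over ℝ) near a point z₀, and set f(z) := ∑_{j=1}^n (∂ρ/∂z_j)(z)·(∂ρ/∂z̄_j)(z) (= ∑_j |∂ρ/∂z_j(z)|²). Suppose Z = (ζ_1,…,ζ_n) ∈ ℂⁿ satisfies ∑_{k=1}^n conj(ζ_k)·(∂f/∂z̄_k)(z₀) = 0 (as happens when Z lies in the complex tangent space at z₀ of a level set of ρ on which f is constant). Then ∑_{j=1}^n (∑_{k=1}^n conj(ζ_k)·(∂²ρ/∂z̄_k∂z̄_j)(z₀))·(∂ρ/∂z_j)(z₀) = −∑_{j,k=1}^n (∂²ρ/∂z_j∂z̄_k)(z₀)·(∂ρ/∂z̄_j)(z₀)·conj(ζ_k) = −(1/2)·L_ρ(z₀)(n(z₀), Z̄), where n(z₀) := 2·(∂ρ/∂z̄_1(z₀),…,∂ρ/∂z̄_n(z₀)) ∈ ℂⁿ. -/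
open Complex Finset

noncomputable section

/-- The `j`-th standard basis vector of `ℂⁿ`. -/
def sb (n : ℕ) (j : Fin n) : EuclideanSpace ℂ (Fin n) := EuclideanSpace.single j 1

/-- Wirtinger derivative `∂ρ/∂z_j` of a real-valued function (real Fréchet derivative). -/
def wdz {n : ℕ} (ρ : EuclideanSpace ℂ (Fin n) → ℝ) (z : EuclideanSpace ℂ (Fin n))
    (j : Fin n) : ℂ :=
  (1 / 2 : ℂ) * ((fderiv ℝ ρ z (sb n j) : ℂ) -
    Complex.I * (fderiv ℝ ρ z ((Complex.I : ℂ) • sb n j) : ℂ))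

/-- Wirtinger derivative `∂ρ/∂z̄_j` of a real-valued function. -/
def wdzbar {n : ℕ} (ρ : EuclideanSpace ℂ (Fin n) → ℝ) (z : EuclideanSpace ℂ (Fin n))
    (j : Fin n) : ℂ :=
  (1 / 2 : ℂ) * ((fderiv ℝ ρ z (sb n j) : ℂ) +
    Complex.I * (fderiv ℝ ρ z ((Complex.I : ℂ) • sb n j) : ℂ))

/-- Wirtinger derivative `∂f/∂z̄_k` of a complex-valued function. -/
def wdzbarC {n : ℕ} (f : EuclideanSpace ℂ (Fin n) → ℂ) (z : EuclideanSpace ℂ (Fin n))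
    (k : Fin n) : ℂ :=
  (1 / 2 : ℂ) * (fderiv ℝ f z (sb n k) +
    Complex.I * fderiv ℝ f z ((Complex.I : ℂ) • sb n k))

/-- Real second Fréchet derivative `D²ρ(z)(v,w)`. -/
def D2 {n : ℕ} (ρ : EuclideanSpace ℂ (Fin n) → ℝ)
    (z v w : EuclideanSpace ℂ (Fin n)) : ℝ :=
  fderiv ℝ (fun y => fderiv ℝ ρ y v) z w

/-- The mixed complex second derivative `∂²ρ/∂z_j∂z̄_k(z)`. -/
def dzdzbar {n : ℕ} (ρ : EuclideanSpace ℂ (Fin n) → ℝ) (z : EuclideanSpace ℂ (Fin n))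
    (j k : Fin n) : ℂ :=
  (1 / 4 : ℂ) * ((D2 ρ z (sb n j) (sb n k) : ℂ)
    + (D2 ρ z ((Complex.I : ℂ) • sb n j) ((Complex.I : ℂ) • sb n k) : ℂ)
    + Complex.I * ((D2 ρ z (sb n j) ((Complex.I : ℂ) • sb n k) : ℂ)
      - (D2 ρ z ((Complex.I : ℂ) • sb n j) (sb n k) : ℂ)))

/-- The antiholomorphic second derivative `∂²ρ/∂z̄_k∂z̄_j(z)`. -/
def dzbardzbar {n : ℕ} (ρ : EuclideanSpace ℂ (Fin n) → ℝ) (z : EuclideanSpace ℂ (Fin n))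
    (k j : Fin n) : ℂ :=
  (1 / 4 : ℂ) * ((D2 ρ z (sb n k) (sb n j) : ℂ)
    - (D2 ρ z ((Complex.I : ℂ) • sb n k) ((Complex.I : ℂ) • sb n j) : ℂ)
    + Complex.I * ((D2 ρ z (sb n k) ((Complex.I : ℂ) • sb n j) : ℂ)
      + (D2 ρ z ((Complex.I : ℂ) • sb n k) (sb n j) : ℂ)))

/-- The Levi form `L_ρ(z)(u, w̄) = ∑_{j,k} ∂²ρ/∂z_j∂z̄_k(z)·u_j·conj(w_k)`. -/
def Levi {n : ℕ} (ρ : EuclideanSpace ℂ (Fin n) → ℝ) (z : EuclideanSpace ℂ (Fin n))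
    (u w : Fin n → ℂ) : ℂ :=
  ∑ j, ∑ k, dzdzbar ρ z j k * u j * (starRingEnd ℂ) (w k)

/-!
`∂/∂z̄_k` satisfies the Leibniz rule, so
`∂f/∂z̄_k = ∑_j (∂ρ/∂z_j · ∂(∂ρ/∂z̄_j)/∂z̄_k + ∂ρ/∂z̄_j · ∂(∂ρ/∂z_j)/∂z̄_k)`.
Expanding in real second derivatives, `∂(∂ρ/∂z_j)/∂z̄_k` is literally `∂²ρ/∂z_j∂z̄_k`, while
`∂(∂ρ/∂z̄_j)/∂z̄_k` becomes `∂²ρ/∂z̄_k∂z̄_j` after using the symmetry of the real Hessian of the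
`C²` function `ρ`. Pairing with `Z̄`, the hypothesis says that the two resulting sums add up to `0`;
the second identity is the definition of the Levi form at `n = 2 ∂̄ρ`.
-/

theorem ContDiffAt.differentiableAt_fderiv {𝕜 E F : Type*} [NontriviallyNormedField 𝕜]
    [NormedAddCommGroup E] [NormedSpace 𝕜 E] [NormedAddCommGroup F] [NormedSpace 𝕜 F]
    {f : E → F} {x : E} (hf : ContDiffAt 𝕜 2 f x) : DifferentiableAt 𝕜 (fderiv 𝕜 f) x :=
  (hf.fderiv_right (m := 1) (by norm_num)).differentiableAt one_ne_zero

variable {n : ℕ}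

section WirtingerCalculus

variable {f g : EuclideanSpace ℂ (Fin n) → ℂ} {z : EuclideanSpace ℂ (Fin n)} (k : Fin n)

theorem wdzbarC_ofReal {h : EuclideanSpace ℂ (Fin n) → ℝ} (hh : DifferentiableAt ℝ h z) :
    wdzbarC (fun y => (h y : ℂ)) z k = wdzbar h z k := by
  rw [wdzbarC, wdzbar,
    HasFDerivAt.fderiv (f := fun y => (h y : ℂ)) (ofRealCLM.hasFDerivAt.comp z hh.hasFDerivAt)]
  rfl

theorem wdzbarC_const_mul (c : ℂ) (hf : DifferentiableAt ℝ f z) :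
    wdzbarC (fun y => c * f y) z k = c * wdzbarC f z k := by
  simp only [wdzbarC, (hf.hasFDerivAt.const_mul c).fderiv, smul_apply, smul_eq_mul]
  ring

theorem wdzbarC_add (hf : DifferentiableAt ℝ f z) (hg : DifferentiableAt ℝ g z) :
    wdzbarC (fun y => f y + g y) z k = wdzbarC f z k + wdzbarC g z k := by
  simp only [wdzbarC, (hf.hasFDerivAt.fun_add hg.hasFDerivAt).fderiv, add_apply]
  ring

theorem wdzbarC_sub (hf : DifferentiableAt ℝ f z) (hg : DifferentiableAt ℝ g z) :
    wdzbarC (fun y => f y - g y) z k = wdzbarC f z k - wdzbarC g z k := by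
  simp only [wdzbarC, (hf.hasFDerivAt.fun_sub hg.hasFDerivAt).fderiv, sub_apply]
  ring

theorem wdzbarC_mul (hf : DifferentiableAt ℝ f z) (hg : DifferentiableAt ℝ g z) :
    wdzbarC (fun y => f y * g y) z k = f z * wdzbarC g z k + g z * wdzbarC f z k := by
  simp only [wdzbarC, (hf.hasFDerivAt.fun_mul hg.hasFDerivAt).fderiv, add_apply, smul_apply,
    smul_eq_mul]
  ring

theorem wdzbarC_sum {ι : Type*} (s : Finset ι) {F : ι → EuclideanSpace ℂ (Fin n) → ℂ}
    (hF : ∀ i ∈ s, DifferentiableAt ℝ (F i) z) :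
    wdzbarC (fun y => ∑ i ∈ s, F i y) z k = ∑ i ∈ s, wdzbarC (F i) z k := by
  simp only [wdzbarC, (HasFDerivAt.fun_sum fun i hi => (hF i hi).hasFDerivAt).fderiv,
    _root_.sum_apply, mul_sum, ← sum_add_distrib]

end WirtingerCalculus

section SecondDerivatives

variable {ρ : EuclideanSpace ℂ (Fin n) → ℝ} {z : EuclideanSpace ℂ (Fin n)}

theorem D2_comm (hρ : ContDiffAt ℝ 2 ρ z) (v w : EuclideanSpace ℂ (Fin n)) :
    D2 ρ z v w = D2 ρ z w v := by
  have hD2 (v w : EuclideanSpace ℂ (Fin n)) : D2 ρ z v w = fderiv ℝ (fderiv ℝ ρ) z w v := by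
    rw [D2, (hρ.differentiableAt_fderiv.hasFDerivAt.clm_apply (hasFDerivAt_const v z)).fderiv]
    simp
  rw [hD2, hD2, hρ.isSymmSndFDerivAt (by simp)]

variable (j k : Fin n)

theorem wdzbar_fderiv_apply (v : EuclideanSpace ℂ (Fin n)) :
    wdzbar (fun y => fderiv ℝ ρ y v) z k
      = 1 / 2 * ((D2 ρ z v (sb n k) : ℂ) + I * (D2 ρ z v (I • sb n k) : ℂ)) :=
  rfl

theorem differentiableAt_wdz (h : DifferentiableAt ℝ (fderiv ℝ ρ) z) :
    DifferentiableAt ℝ (fun y => wdz ρ y j) z := by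
  unfold wdz
  fun_prop

theorem differentiableAt_wdzbar (h : DifferentiableAt ℝ (fderiv ℝ ρ) z) :
    DifferentiableAt ℝ (fun y => wdzbar ρ y j) z := by
  unfold wdzbar
  fun_prop

theorem wdzbarC_wdz (h : DifferentiableAt ℝ (fderiv ℝ ρ) z) :
    wdzbarC (fun y => wdz ρ y j) z k = dzdzbar ρ z j k := by
  have hv (v : EuclideanSpace ℂ (Fin n)) : DifferentiableAt ℝ (fun y => fderiv ℝ ρ y v) z := by
    fun_prop
  simp only [wdz]
  rw [wdzbarC_const_mul, wdzbarC_sub, wdzbarC_const_mul, wdzbarC_ofReal _ (hv _),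
    wdzbarC_ofReal _ (hv _)]
  · rw [wdzbar_fderiv_apply, wdzbar_fderiv_apply, dzdzbar]
    linear_combination (-(1 / 4 : ℂ) * (D2 ρ z (I • sb n j) (I • sb n k) : ℂ)) * I_sq
  all_goals fun_prop

theorem wdzbarC_wdzbar (hρ : ContDiffAt ℝ 2 ρ z) :
    wdzbarC (fun y => wdzbar ρ y j) z k = dzbardzbar ρ z k j := by
  have h := hρ.differentiableAt_fderiv
  have hv (v : EuclideanSpace ℂ (Fin n)) : DifferentiableAt ℝ (fun y => fderiv ℝ ρ y v) z := by
    fun_prop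
  simp only [wdzbar]
  rw [wdzbarC_const_mul, wdzbarC_add, wdzbarC_const_mul, wdzbarC_ofReal _ (hv _),
    wdzbarC_ofReal _ (hv _)]
  · rw [wdzbar_fderiv_apply, wdzbar_fderiv_apply, dzbardzbar, D2_comm hρ (sb n k) (sb n j),
      D2_comm hρ (I • sb n k) (I • sb n j), D2_comm hρ (sb n k) (I • sb n j),
      D2_comm hρ (I • sb n k) (sb n j)]
    linear_combination ((1 / 4 : ℂ) * (D2 ρ z (I • sb n j) (I • sb n k) : ℂ)) * I_sq
  all_goals fun_prop

theorem wdzbarC_sum_wdz_mul_wdzbar (hρ : ContDiffAt ℝ 2 ρ z) :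
    wdzbarC (fun y => ∑ j, wdz ρ y j * wdzbar ρ y j) z k
      = ∑ j, (wdz ρ z j * dzbardzbar ρ z k j + wdzbar ρ z j * dzdzbar ρ z j k) := by
  have h := hρ.differentiableAt_fderiv
  rw [wdzbarC_sum _ _ fun j _ =>
    (differentiableAt_wdz j h).fun_mul (differentiableAt_wdzbar j h)]
  refine sum_congr rfl fun j _ => ?_
  rw [wdzbarC_mul _ (differentiableAt_wdz j h) (differentiableAt_wdzbar j h),
    wdzbarC_wdz j k h, wdzbarC_wdzbar j k hρ]

end SecondDerivatives

theorem Levi_two_mul_left {ρ : EuclideanSpace ℂ (Fin n) → ℝ} (z : EuclideanSpace ℂ (Fin n))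
    (u w : Fin n → ℂ) :
    Levi ρ z (fun j => 2 * u j) w = 2 * ∑ j, ∑ k, dzdzbar ρ z j k * u j * starRingEnd ℂ (w k) := by
  simp only [Levi, mul_sum]
  exact sum_congr rfl fun j _ => sum_congr rfl fun k _ => by ring

theorem commutator_normal_component_eq_levi {n : ℕ}
    (ρ : EuclideanSpace ℂ (Fin n) → ℝ) (z₀ : EuclideanSpace ℂ (Fin n))
    (hρ : ContDiffAt ℝ 2 ρ z₀) (Z : Fin n → ℂ)
    (f : EuclideanSpace ℂ (Fin n) → ℂ)
    (hf : f = fun z => ∑ j, wdz ρ z j * wdzbar ρ z j)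
    (hZ : ∑ k, (starRingEnd ℂ) (Z k) * wdzbarC f z₀ k = 0) :
    (∑ j, (∑ k, (starRingEnd ℂ) (Z k) * dzbardzbar ρ z₀ k j) * wdz ρ z₀ j
        = -∑ j, ∑ k, dzdzbar ρ z₀ j k * wdzbar ρ z₀ j * (starRingEnd ℂ) (Z k)) ∧
    (-∑ j, ∑ k, dzdzbar ρ z₀ j k * wdzbar ρ z₀ j * (starRingEnd ℂ) (Z k)
        = -(1 / 2 : ℂ) * Levi ρ z₀ (fun j => 2 * wdzbar ρ z₀ j) Z) := by
  subst hf
  have hsplit : ∑ k, starRingEnd ℂ (Z k) * wdzbarC (fun z => ∑ j, wdz ρ z j * wdzbar ρ z j) z₀ k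
      = ∑ j, (∑ k, starRingEnd ℂ (Z k) * dzbardzbar ρ z₀ k j) * wdz ρ z₀ j
        + ∑ j, ∑ k, dzdzbar ρ z₀ j k * wdzbar ρ z₀ j * starRingEnd ℂ (Z k) := by
    simp only [wdzbarC_sum_wdz_mul_wdzbar _ hρ, mul_sum, sum_mul, ← sum_add_distrib]
    rw [sum_comm]
    exact sum_congr rfl fun j _ => sum_congr rfl fun k _ => by ring
  constructor
  · linear_combination hsplit.symm.trans hZ
  · rw [Levi_two_mul_left]
    ring

end
end

section
/- Let H be a symmetric real m×m matrix, J an arbitrary real m×m matrix, and ω ∈ ℝᵐ. Define φ(ε) := ω ⬝ᵥ ((H·(1 + ε·H)⁻¹ + Jᵀ·H·(1 + ε·H)⁻¹·J).mulVec ω) for ε ∈ ℝ (using the matrix inverse, which is the actual inverse for ε near 0 since 1 + 0·H = 1 is invertible). Then φ has derivative at ε = 0 equal to −(‖H.mulVec ω‖² + ‖H.mulVec (J.mulVec ω)‖²), where ‖v‖² := v ⬝ᵥ v. In particular this derivative is always ≤ 0. -/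
/-!
STATEMENT 2: For H a symmetric real m×m matrix, J any real m×m matrix and ω ∈ ℝᵐ,
the function φ(ε) := ω ⬝ᵥ ((H·(1+εH)⁻¹ + Jᵀ·H·(1+εH)⁻¹·J).mulVec ω) has derivative at
ε = 0 equal to −(‖H ω‖² + ‖H(Jω)‖²) (with ‖v‖² = v ⬝ᵥ v); in particular it is ≤ 0.
-/

open Matrix

theorem deriv_levi_along_normal {m : ℕ}
    (H J : Matrix (Fin m) (Fin m) ℝ) (hH : H.IsSymm) (ω : Fin m → ℝ) :
    HasDerivAt
      (fun ε : ℝ => ω ⬝ᵥ ((H * (1 + ε • H)⁻¹ + Jᵀ * H * (1 + ε • H)⁻¹ * J).mulVec ω))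
      (-(H.mulVec ω ⬝ᵥ H.mulVec ω + H.mulVec (J.mulVec ω) ⬝ᵥ H.mulVec (J.mulVec ω))) 0 ∧
    -(H.mulVec ω ⬝ᵥ H.mulVec ω + H.mulVec (J.mulVec ω) ⬝ᵥ H.mulVec (J.mulVec ω)) ≤ 0 := by
  set B : ℝ → Matrix (Fin m) (Fin m) ℝ := fun ε => 1 + ε • H with hBdef
  set K : ℝ → Matrix (Fin m) (Fin m) ℝ := fun ε => H * (B ε)⁻¹ * H with hKdef
  set ψ : ℝ → ℝ := fun ε =>
    -(ω ⬝ᵥ (K ε).mulVec ω + (J.mulVec ω) ⬝ᵥ (K ε).mulVec (J.mulVec ω)) with hψdef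
  have hB0 : B 0 = 1 := by simp [hBdef]
  have hBcont : Continuous B := by
    apply continuous_const.add
    exact continuous_id.smul continuous_const
  have hinvcont : ContinuousAt (fun ε => (B ε)⁻¹) 0 := by
    have h1 : ContinuousAt Ring.inverse ((B 0).det) := by
      rw [hB0, det_one, Ring.inverse_eq_inv']
      exact continuousAt_inv₀ one_ne_zero
    exact (continuousAt_matrix_inv (B 0) h1).comp hBcont.continuousAt
  have hψcont : ContinuousAt ψ 0 := by
    have hK : ContinuousAt K 0 :=
      ((continuous_const.matrix_mul continuous_id).matrix_mul
        continuous_const).continuousAt.comp hinvcont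
    have h1 : ContinuousAt (fun M : Matrix (Fin m) (Fin m) ℝ =>
        -(ω ⬝ᵥ M.mulVec ω + (J.mulVec ω) ⬝ᵥ M.mulVec (J.mulVec ω))) (K 0) := by
      apply ContinuousAt.neg
      apply ContinuousAt.add
      · exact ((continuous_const.dotProduct
          (continuous_id.matrix_mulVec continuous_const))).continuousAt
      · exact ((continuous_const.dotProduct
          (continuous_id.matrix_mulVec continuous_const))).continuousAt
    exact h1.comp hK
  -- eventual invertibility
  have hdet : ∀ᶠ ε in nhds (0:ℝ), IsUnit (B ε).det := by
    have hc : ContinuousAt (fun ε => (B ε).det) 0 :=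
      (hBcont.matrix_det).continuousAt
    have h0 : (B 0).det = 1 := by rw [hB0, det_one]
    have : ∀ᶠ ε in nhds (0:ℝ), (B ε).det ≠ 0 :=
      hc.eventually_ne (by rw [h0]; exact one_ne_zero)
    exact this.mono fun ε hε => isUnit_iff_ne_zero.mpr hε
  set φ : ℝ → ℝ := fun ε =>
    ω ⬝ᵥ ((H * (B ε)⁻¹ + Jᵀ * H * (B ε)⁻¹ * J).mulVec ω) with hφdef
  have key : ∀ ε : ℝ, IsUnit (B ε).det → φ ε - φ 0 = ε * ψ ε := by
    intro ε hu
    have hHB : H * (B ε)⁻¹ = H - ε • K ε := by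
      have h1 : H * (B ε)⁻¹ * B ε = H := by
        rw [mul_assoc, Matrix.nonsing_inv_mul _ hu, mul_one]
      calc H * (B ε)⁻¹ = H * (B ε)⁻¹ * B ε - H * (B ε)⁻¹ * (ε • H) := by
            rw [hBdef]; simp [mul_add]
        _ = H - ε • K ε := by rw [h1, mul_smul_comm]
    have hφ0 : φ 0 = ω ⬝ᵥ ((H + Jᵀ * H * J).mulVec ω) := by
      rw [hφdef]; simp [hB0]
    have hq : ∀ M : Matrix (Fin m) (Fin m) ℝ,
        ω ⬝ᵥ (Jᵀ * M * J).mulVec ω = (J.mulVec ω) ⬝ᵥ M.mulVec (J.mulVec ω) := by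
      intro M
      rw [← Matrix.mulVec_mulVec, ← Matrix.mulVec_mulVec, Matrix.dotProduct_mulVec,
        Matrix.vecMul_transpose]
    have hexp : φ ε = ω ⬝ᵥ ((H + Jᵀ * H * J).mulVec ω) + ε * ψ ε := by
      have : Jᵀ * H * (B ε)⁻¹ * J = Jᵀ * (H * (B ε)⁻¹) * J := by
        rw [mul_assoc Jᵀ H ((B ε)⁻¹)]
      rw [hφdef]
      simp only [this, hHB]
      rw [mul_sub, sub_mul]
      have hJK : Jᵀ * (ε • K ε) * J = ε • (Jᵀ * K ε * J) := by
        rw [mul_smul_comm, Matrix.smul_mul]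
      rw [hJK]
      simp only [Matrix.add_mulVec, Matrix.sub_mulVec, Matrix.smul_mulVec,
        dotProduct_add, dotProduct_sub, dotProduct_smul, smul_eq_mul]
      rw [hq (K ε)]
      ring
    rw [hexp, hφ0]; ring
  have hslope : HasDerivAt φ (ψ 0) 0 := by
    rw [hasDerivAt_iff_tendsto_slope]
    have hev : ∀ᶠ ε in nhdsWithin (0:ℝ) {(0:ℝ)}ᶜ, slope φ 0 ε = ψ ε := by
      filter_upwards [nhdsWithin_le_nhds hdet, self_mem_nhdsWithin] with ε hu hε
      have hε' : ε ≠ 0 := hε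
      rw [slope_def_field, div_eq_iff (sub_ne_zero.mpr hε'), sub_zero]
      rw [key ε hu]; ring
    have : Filter.Tendsto ψ (nhdsWithin (0:ℝ) {(0:ℝ)}ᶜ) (nhds (ψ 0)) :=
      hψcont.continuousWithinAt.tendsto
    exact Filter.Tendsto.congr' (hev.mono fun ε h => h.symm) this
  have hψ0 : ψ 0 = -(H.mulVec ω ⬝ᵥ H.mulVec ω +
      H.mulVec (J.mulVec ω) ⬝ᵥ H.mulVec (J.mulVec ω)) := by
    have hK0 : K 0 = H * H := by rw [hKdef]; simp [hB0]
    have hd : ∀ v : Fin m → ℝ, v ⬝ᵥ (H * H).mulVec v = H.mulVec v ⬝ᵥ H.mulVec v := by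
      intro v
      rw [← Matrix.mulVec_mulVec, Matrix.dotProduct_mulVec]
      congr 1
      conv_lhs => rw [← hH.eq]
      rw [Matrix.vecMul_transpose]
    rw [hψdef]; simp only [hK0, hd]
  constructor
  · rw [← hψ0]
    exact hslope
  · have h1 : 0 ≤ H.mulVec ω ⬝ᵥ H.mulVec ω :=
      Finset.sum_nonneg fun i _ => mul_self_nonneg _
    have h2 : 0 ≤ H.mulVec (J.mulVec ω) ⬝ᵥ H.mulVec (J.mulVec ω) :=
      Finset.sum_nonneg fun i _ => mul_self_nonneg _
    linarith
end

section
/- Let H be a symmetric real m×m matrix, J an arbitrary real m×m matrix, and ω ∈ ℝᵐ, and define φ(ε) := ω ⬝ᵥ ((H·(1 + ε·H)⁻¹ + Jᵀ·H·(1 + ε·H)⁻¹·J).mulVec ω). If the derivative of φ at ε = 0 vanishes, then H.mulVec ω = 0 and H.mulVec (J.mulVec ω) = 0. -/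
/-!
The derivative of `ε ↦ (1 + ε H)⁻¹` at `0` is `-H`, so the derivative of `φ` at `0` is
`-(ω ⬝ᵥ H² ω + ω ⬝ᵥ Jᵀ H² J ω)`. Since `H` is symmetric, `H² = Hᵀ H` and `Jᵀ H² J = (H J)ᵀ (H J)`,
so this is `-(|H ω|² + |H J ω|²)`, and a vanishing sum of two squares forces both vectors to vanish.
-/

open Matrix

theorem Matrix.hasDerivAt_inv_one_add_smul {n 𝕜 : Type*} [Fintype n] [DecidableEq n]
    [RCLike 𝕜] (A : Matrix n n 𝕜) :
    HasDerivAt (fun ε : 𝕜 => (1 + ε • A)⁻¹) (-A) 0 := by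
  -- Any norm inducing the product topology will do; the ℓ∞ operator norm is submultiplicative.
  let _ : NormedRing (Matrix n n 𝕜) := Matrix.linftyOpNormedRing
  let _ : NormedAlgebra 𝕜 (Matrix n n 𝕜) := Matrix.linftyOpNormedAlgebra
  have _ : HasSummableGeomSeries (Matrix n n 𝕜) :=
    @instHasSummableGeomSeriesOfCompleteSpace _ _ (FiniteDimensional.complete 𝕜 _)
  have hline := ((hasDerivAt_id (0 : 𝕜)).smul_const A).const_add (1 : Matrix n n 𝕜)
  rw [one_smul] at hline
  have hinv : HasFDerivAt Ring.inverse (-ContinuousLinearMap.mulLeftRight 𝕜 _ 1 1)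
      (1 + id (0 : 𝕜) • A) := by
    simpa using hasFDerivAt_ringInverse (𝕜 := 𝕜) (1 : (Matrix n n 𝕜)ˣ)
  have h := hinv.comp_hasDerivAt 0 hline
  simp [Function.comp_def, ← nonsing_inv_eq_ringInverse] at h
  exact h

theorem Matrix.hasDerivAt_dotProduct_mul_inv_one_add_smul_mul_mulVec {n 𝕜 : Type*} [Fintype n]
    [DecidableEq n] [RCLike 𝕜] (A B C : Matrix n n 𝕜) (u w : n → 𝕜) :
    HasDerivAt (fun ε : 𝕜 => u ⬝ᵥ (B * (1 + ε • A)⁻¹ * C) *ᵥ w)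
      (-(u ⬝ᵥ (B * A * C) *ᵥ w)) 0 := by
  let _ : NormedAddCommGroup (Matrix n n 𝕜) := Matrix.linftyOpNormedAddCommGroup
  let _ : NormedSpace 𝕜 (Matrix n n 𝕜) := Matrix.linftyOpNormedSpace
  let ℓ : Matrix n n 𝕜 →ₗ[𝕜] 𝕜 :=
    { toFun := fun X => u ⬝ᵥ (B * X * C) *ᵥ w
      map_add' := fun X Y => by simp [Matrix.mul_add, Matrix.add_mul, add_mulVec]
      map_smul' := fun c X => by simp [smul_mulVec] }
  have h := ℓ.toContinuousLinearMap.hasFDerivAt.comp_hasDerivAt (0 : 𝕜)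
    (hasDerivAt_inv_one_add_smul A)
  change HasDerivAt _ (ℓ (-A)) 0 at h
  simpa [ℓ, Function.comp_def, neg_mulVec] using h

theorem Matrix.dotProduct_transpose_mul_self_mulVec {n R : Type*} [Fintype n] [CommSemiring R]
    (A : Matrix n n R) (v : n → R) : v ⬝ᵥ (Aᵀ * A) *ᵥ v = A *ᵥ v ⬝ᵥ A *ᵥ v := by
  rw [← mulVec_mulVec, dotProduct_mulVec, vecMul_transpose]

theorem Matrix.IsSymm.hasDerivAt_dotProduct_inv_one_add_smul_mulVec {n 𝕜 : Type*} [Fintype n]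
    [DecidableEq n] [RCLike 𝕜] {H : Matrix n n 𝕜} (hH : H.IsSymm) (J : Matrix n n 𝕜)
    (v : n → 𝕜) :
    HasDerivAt (fun ε : 𝕜 => v ⬝ᵥ (H * (1 + ε • H)⁻¹ + Jᵀ * H * (1 + ε • H)⁻¹ * J) *ᵥ v)
      (-(H *ᵥ v ⬝ᵥ H *ᵥ v + H *ᵥ J *ᵥ v ⬝ᵥ H *ᵥ J *ᵥ v)) 0 := by
  have hHH : H * H * 1 = Hᵀ * H := by rw [Matrix.mul_one, hH.eq]
  have hJHHJ : Jᵀ * H * H * J = (H * J)ᵀ * (H * J) := by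
    simp only [transpose_mul, hH.eq, Matrix.mul_assoc]
  have h := (hasDerivAt_dotProduct_mul_inv_one_add_smul_mul_mulVec H H 1 v v).fun_add
    (hasDerivAt_dotProduct_mul_inv_one_add_smul_mul_mulVec H (Jᵀ * H) J v v)
  rw [hHH, hJHHJ, dotProduct_transpose_mul_self_mulVec, dotProduct_transpose_mul_self_mulVec,
    ← mulVec_mulVec, ← neg_add] at h
  simp only [Matrix.mul_one] at h
  simp only [add_mulVec, dotProduct_add]
  exact h

theorem Matrix.dotProduct_self_nonneg {n R : Type*} [Fintype n] [Ring R] [LinearOrder R]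
    [IsStrictOrderedRing R] (v : n → R) : 0 ≤ v ⬝ᵥ v :=
  Finset.sum_nonneg fun i _ => mul_self_nonneg (v i)

theorem hessian_annihilates_null_directions {m : ℕ}
    (H J : Matrix (Fin m) (Fin m) ℝ) (hH : H.IsSymm) (ω : Fin m → ℝ)
    (hderiv : deriv
      (fun ε : ℝ => ω ⬝ᵥ ((H * (1 + ε • H)⁻¹ + Jᵀ * H * (1 + ε • H)⁻¹ * J).mulVec ω)) 0 = 0) :
    H.mulVec ω = 0 ∧ H.mulVec (J.mulVec ω) = 0 := by
  rw [(hH.hasDerivAt_dotProduct_inv_one_add_smul_mulVec J ω).deriv, neg_eq_zero,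
    add_eq_zero_iff_of_nonneg (dotProduct_self_nonneg _) (dotProduct_self_nonneg _)] at hderiv
  exact ⟨dotProduct_self_eq_zero.mp hderiv.1, dotProduct_self_eq_zero.mp hderiv.2⟩
end

section
/- Let F be a real inner product space, U ⊆ F open, and ρ : F → ℝ twice continuously differentiable on U (ContDiffOn ℝ 2 ρ U) with ‖∇ρ(z)‖ = 1 for all z ∈ U, where ∇ρ denotes the gradient with respect to the inner product. Let z₀ ∈ U and t ∈ ℝ be such that z₀ + s·∇ρ(z₀) ∈ U for all s between 0 and t. Then ∇ρ(z₀ + t·∇ρ(z₀)) = ∇ρ(z₀) and ρ(z₀ + t·∇ρ(z₀)) = ρ(z₀) + t. -/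
/-!
Write `v = ∇ρ z₀` and `H = D(∇ρ)`, a symmetric operator since `ρ` is `C²`. Differentiating
`‖∇ρ‖² ≡ 1` gives `⟪H w, ∇ρ⟫ = 0` for every `w`, hence `‖H ∇ρ‖² = ⟪H (H ∇ρ), ∇ρ⟫ = 0`.
Along the line `s ↦ z₀ + s • v` the defect `g s = ∇ρ (z₀ + s • v) - v` therefore satisfies
`g' = H v = -H g`, and Grönwall's inequality with `g 0 = 0` forces `g ≡ 0`; negative times follow
by passing to `-ρ`. Then `ρ` has derivative `⟪v, v⟫ = 1` along the segment.
-/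

open Set Topology InnerProductSpace

theorem inner_fderiv_apply_self_eq_zero_of_eventually_norm_eq {E F : Type*}
    [NormedAddCommGroup E] [NormedSpace ℝ E] [NormedAddCommGroup F] [InnerProductSpace ℝ F]
    {f : E → F} {x : E} {c : ℝ}
    (hf : DifferentiableAt ℝ f x) (hc : ∀ᶠ y in 𝓝 x, ‖f y‖ = c) (w : E) :
    ⟪fderiv ℝ f x w, f x⟫_ℝ = 0 := by
  have hconst : (fun y => ‖f y‖ ^ 2) =ᶠ[𝓝 x] fun _ => c ^ 2 := by
    filter_upwards [hc] with y hy
    rw [hy]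
  have hzero := (hf.hasFDerivAt.norm_sq.congr_of_eventuallyEq hconst.symm).unique
    (hasFDerivAt_const (c ^ 2) x)
  have := congrArg (fun L => L w) hzero
  simp only [smul_apply, ContinuousLinearMap.comp_apply, innerSL_apply_apply,
    zero_apply, smul_eq_zero, two_ne_zero, false_or] at this
  rwa [real_inner_comm]

theorem hasDerivAt_const_add_smul {E : Type*} [NormedAddCommGroup E] [NormedSpace ℝ E]
    (z v : E) (s : ℝ) : HasDerivAt (fun s : ℝ => z + s • v) v s := by
  simpa using ((hasDerivAt_id s).smul_const v).const_add z

section Gradient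

variable {F : Type*} [NormedAddCommGroup F] [InnerProductSpace ℝ F] [CompleteSpace F]
  {ρ : F → ℝ} {U : Set F} {z : F}

theorem gradient_fun_neg (ρ : F → ℝ) (z : F) : gradient (fun x => -ρ x) z = -gradient ρ z := by
  simp only [gradient, fderiv_fun_neg, map_neg]

theorem ContDiffAt.gradient {n : WithTop ℕ∞} (hρ : ContDiffAt ℝ (n + 1) ρ z) :
    ContDiffAt ℝ n (gradient ρ) z :=
  (toDual ℝ F).symm.toContinuousLinearEquiv.contDiff.contDiffAt.comp z hρ.fderiv_right_succ

theorem ContDiffOn.gradient_of_isOpen {n : WithTop ℕ∞} (hρ : ContDiffOn ℝ (n + 1) ρ U)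
    (hU : IsOpen U) : ContDiffOn ℝ n (gradient ρ) U := fun _ hz =>
  (hρ.contDiffAt (hU.mem_nhds hz)).gradient.contDiffWithinAt

theorem inner_fderiv_gradient_apply (ρ : F → ℝ) (z w u : F) :
    ⟪fderiv ℝ (gradient ρ) z w, u⟫_ℝ = fderiv ℝ (fderiv ℝ ρ) z w u := by
  have : gradient ρ = (toDual ℝ F).symm.toContinuousLinearEquiv ∘ fderiv ℝ ρ := rfl
  rw [this, ContinuousLinearEquiv.comp_fderiv]
  exact toDual_symm_apply

theorem fderiv_gradient_apply_gradient_eq_zero {c : ℝ} (hρ : ContDiffAt ℝ 2 ρ z)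
    (hc : ∀ᶠ y in 𝓝 z, ‖gradient ρ y‖ = c) :
    fderiv ℝ (gradient ρ) z (gradient ρ z) = 0 := by
  set H := fderiv ℝ (gradient ρ) z
  have hperp (w : F) : ⟪H w, gradient ρ z⟫_ℝ = 0 :=
    inner_fderiv_apply_self_eq_zero_of_eventually_norm_eq
      ((hρ.gradient (n := 1)).differentiableAt one_ne_zero) hc w
  have hsymm : IsSymmSndFDerivAt ℝ ρ z := hρ.isSymmSndFDerivAt (by simp)
  rw [← inner_self_eq_zero (𝕜 := ℝ), inner_fderiv_gradient_apply, hsymm.eq,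
    ← inner_fderiv_gradient_apply, hperp]

theorem gradient_add_smul_gradient_eq_of_nonneg {c t : ℝ} (hU : IsOpen U)
    (hρ : ContDiffOn ℝ 2 ρ U) (hgrad : ∀ y ∈ U, ‖gradient ρ y‖ = c)
    (hseg : ∀ s ∈ Icc 0 t, z + s • gradient ρ z ∈ U) :
    ∀ s ∈ Icc 0 t, gradient ρ (z + s • gradient ρ z) = gradient ρ z := by
  set v := gradient ρ z
  set γ : ℝ → F := fun s => z + s • v
  set H := fun s => fderiv ℝ (gradient ρ) (γ s)
  have hγc : ContinuousOn γ (Icc 0 t) := by fun_prop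
  have hg1 : ContDiffOn ℝ 1 (gradient ρ) U := hρ.gradient_of_isOpen hU
  obtain ⟨M, hM⟩ := isCompact_Icc.exists_bound_of_continuousOn
    ((hg1.continuousOn_fderiv_of_isOpen hU le_rfl).comp hγc hseg)
  have hderiv : ∀ s ∈ Ico 0 t,
      HasDerivWithinAt (fun s => gradient ρ (γ s) - v) (H s v) (Ici s) s := by
    intro s hs
    have hsU := hseg s (Ico_subset_Icc_self hs)
    have hdiff : DifferentiableAt ℝ (gradient ρ) (γ s) :=
      (hg1.contDiffAt (hU.mem_nhds hsU)).differentiableAt one_ne_zero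
    exact ((hdiff.hasFDerivAt.comp_hasDerivAt s (hasDerivAt_const_add_smul z v s)).sub_const
      v).hasDerivWithinAt
  have hbound : ∀ s ∈ Ico 0 t, ‖H s v‖ ≤ M * ‖gradient ρ (γ s) - v‖ := by
    intro s hs
    have hsU := hseg s (Ico_subset_Icc_self hs)
    have hkill : H s (gradient ρ (γ s)) = 0 := fderiv_gradient_apply_gradient_eq_zero
      (hρ.contDiffAt (hU.mem_nhds hsU)) ((hU.eventually_mem hsU).mono hgrad)
    calc ‖H s v‖ = ‖H s (gradient ρ (γ s) - v)‖ := by rw [map_sub, hkill, zero_sub, norm_neg]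
      _ ≤ ‖H s‖ * ‖gradient ρ (γ s) - v‖ := (H s).le_opNorm _
      _ ≤ M * ‖gradient ρ (γ s) - v‖ := by gcongr; exact hM s (Ico_subset_Icc_self hs)
  intro s hs
  refine sub_eq_zero.mp (eq_zero_of_abs_deriv_le_mul_abs_self_of_eq_zero_right
    ((hg1.continuousOn.comp hγc hseg).sub continuousOn_const) hderiv ?_ hbound s hs)
  simp [γ, v]

theorem gradient_add_smul_gradient_eq {c t : ℝ} (hU : IsOpen U)
    (hρ : ContDiffOn ℝ 2 ρ U) (hgrad : ∀ y ∈ U, ‖gradient ρ y‖ = c)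
    (hseg : ∀ s ∈ uIcc 0 t, z + s • gradient ρ z ∈ U) :
    ∀ s ∈ uIcc 0 t, gradient ρ (z + s • gradient ρ z) = gradient ρ z := by
  rcases le_total 0 t with ht | ht
  · rw [uIcc_of_le ht] at hseg ⊢
    exact gradient_add_smul_gradient_eq_of_nonneg hU hρ hgrad hseg
  · rw [uIcc_of_ge ht] at hseg ⊢
    have hflip (s : ℝ) : z + s • gradient (fun x => -ρ x) z = z + (-s) • gradient ρ z := by
      rw [gradient_fun_neg, smul_neg, neg_smul]
    have hneg := gradient_add_smul_gradient_eq_of_nonneg (t := -t) hU hρ.neg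
      (fun y hy => by rw [gradient_fun_neg, norm_neg, hgrad y hy])
      (fun s hs => hflip s ▸ hseg (-s) ⟨by linarith [hs.2], by linarith [hs.1]⟩)
    intro s hs
    have := hneg (-s) ⟨by linarith [hs.2], by linarith [hs.1]⟩
    rwa [hflip, neg_neg, gradient_fun_neg, gradient_fun_neg, neg_inj] at this

end Gradient

theorem apply_add_smul_eq_of_gradient_eq {F : Type*} [NormedAddCommGroup F]
    [InnerProductSpace ℝ F] [CompleteSpace F] {ρ : F → ℝ} {z v w : F} {t : ℝ}
    (hd : ∀ s ∈ uIcc 0 t, DifferentiableAt ℝ ρ (z + s • v))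
    (hg : ∀ s ∈ uIcc 0 t, gradient ρ (z + s • v) = w) :
    ρ (z + t • v) = ρ z + t * ⟪w, v⟫_ℝ := by
  have hderiv : ∀ s ∈ uIcc 0 t, HasDerivAt (fun s => ρ (z + s • v)) ⟪w, v⟫_ℝ s := by
    intro s hs
    rw [← hg s hs, inner_gradient_left]
    exact (hd s hs).hasFDerivAt.comp_hasDerivAt s (hasDerivAt_const_add_smul z v s)
  have := intervalIntegral.integral_eq_sub_of_hasDerivAt hderiv intervalIntegrable_const
  simp only [intervalIntegral.integral_const, sub_zero, smul_eq_mul, zero_smul, add_zero] at this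
  linarith

theorem eikonal_gradient_constant_along_normal
    {F : Type*} [NormedAddCommGroup F] [InnerProductSpace ℝ F] [CompleteSpace F]
    {U : Set F} (hU : IsOpen U) (ρ : F → ℝ) (hρ : ContDiffOn ℝ 2 ρ U)
    (hgrad : ∀ z ∈ U, ‖gradient ρ z‖ = 1)
    (z₀ : F) (hz₀ : z₀ ∈ U) (t : ℝ)
    (hseg : ∀ s ∈ Set.uIcc (0 : ℝ) t, z₀ + s • gradient ρ z₀ ∈ U) :
    gradient ρ (z₀ + t • gradient ρ z₀) = gradient ρ z₀ ∧
      ρ (z₀ + t • gradient ρ z₀) = ρ z₀ + t := by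
  have hline := gradient_add_smul_gradient_eq hU hρ hgrad hseg
  have hd (s : ℝ) (hs : s ∈ uIcc 0 t) : DifferentiableAt ℝ ρ (z₀ + s • gradient ρ z₀) :=
    (hρ.contDiffAt (hU.mem_nhds (hseg s hs))).differentiableAt two_ne_zero
  refine ⟨hline t right_mem_uIcc, ?_⟩
  rw [apply_add_smul_eq_of_gradient_eq hd hline, real_inner_self_eq_norm_sq, hgrad z₀ hz₀,
    one_pow, mul_one]
end

section
/- Let ρ : ℂⁿ → ℝ be twice continuously differentiable (over ℝ) near a point z with ρ(z) < 0, and let u := −log(−ρ) on the neighborhood of z where ρ < 0. Then for every w ∈ ℂⁿ: (−ρ(z))·L_u(z)(w,w̄) = L_ρ(z)(w,w̄) − (1/ρ(z))·|∑_{j=1}^n (∂ρ/∂z_j)(z)·w_j|². Consequently, if u is plurisubharmonic near z (i.e. L_u(z')(w,w̄) ≥ 0 for all z' near z and all w), then ∑_{j,k=1}^n (∂²ρ/∂z_j∂z̄_k(z) − (1/ρ(z))·∂ρ/∂z_j(z)·∂ρ/∂z̄_k(z))·w_j·conj(w_k) ≥ 0 for all w ∈ ℂⁿ. -/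
/-!
Write `u = φ ∘ ρ` with `φ t = -log (-t)`, so `φ' t = -1/t` and `φ'' t = 1/t²`. The chain rule gives
`D²u = φ'(ρ) D²ρ + φ''(ρ) Dρ ⊗ Dρ`, and in Wirtinger coordinates the rank-one term becomes
`|∑ⱼ ∂ρ/∂zⱼ wⱼ|²` because `∂ρ/∂z̄ₖ` is the conjugate of `∂ρ/∂zₖ` for real `ρ`. Multiplying by `-ρ(z)`
gives the identity; its right-hand side is the form `Q_ρ`, so `Q_ρ = (-ρ(z)) L_u ≥ 0` when `u` is
plurisubharmonic, and it is real because `D²ρ(z)` is symmetric.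
-/

open Complex Finset

noncomputable section

open Filter Topology

section SecondDerivative

variable {E : Type*} [NormedAddCommGroup E] [NormedSpace ℝ E]

theorem fderiv_fderiv_apply_comp {φ φ' : ℝ → ℝ} {φ'' : ℝ} {f : E → ℝ} {z : E}
    (hφ : ∀ᶠ t in 𝓝 (f z), HasDerivAt φ (φ' t) t) (hφ' : HasDerivAt φ' φ'' (f z))
    (hf : ContDiffAt ℝ 2 f z) (v w : E) :
    fderiv ℝ (fun y => fderiv ℝ (fun x => φ (f x)) y v) z w
      = φ' (f z) * fderiv ℝ (fun y => fderiv ℝ f y v) z w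
        + φ'' * fderiv ℝ f z v * fderiv ℝ f z w := by
  have hfd : ∀ᶠ y in 𝓝 z, DifferentiableAt ℝ f y :=
    (hf.eventually (by simp)).mono fun y hy => hy.differentiableAt (by norm_num)
  have hchain : (fun y => fderiv ℝ (fun x => φ (f x)) y v)
      =ᶠ[𝓝 z] fun y => φ' (f y) * fderiv ℝ f y v := by
    filter_upwards [hfd, hf.continuousAt.eventually hφ] with y hy hφy
    have hd : HasFDerivAt (fun x => φ (f x)) (φ' (f y) • fderiv ℝ f y) y :=
      hφy.comp_hasFDerivAt y hy.hasFDerivAt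
    rw [hd.fderiv]
    rfl
  have hDf : DifferentiableAt ℝ (fun y => fderiv ℝ f y v) z :=
    ((hf.fderiv_right (m := 1) (by norm_num)).differentiableAt one_ne_zero).clm_apply
      (differentiableAt_const v)
  have hprod : HasFDerivAt (fun y => φ' (f y) * fderiv ℝ f y v) _ z :=
    (hφ'.comp_hasFDerivAt z (hf.differentiableAt (by norm_num)).hasFDerivAt).mul
      hDf.hasFDerivAt
  rw [hchain.fderiv_eq, hprod.fderiv]
  simp only [add_apply, smul_apply, smul_eq_mul, Function.comp_apply]
  ring

theorem fderiv_fderiv_apply_comm {f : E → ℝ} {z : E} (hf : ContDiffAt ℝ 2 f z) (v w : E) :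
    fderiv ℝ (fun y => fderiv ℝ f y v) z w = fderiv ℝ (fun y => fderiv ℝ f y w) z v := by
  have hDf : DifferentiableAt ℝ (fderiv ℝ f) z :=
    (hf.fderiv_right (m := 1) (by norm_num)).differentiableAt one_ne_zero
  have happly : ∀ v w, fderiv ℝ (fun y => fderiv ℝ f y v) z w = fderiv ℝ (fderiv ℝ f) z w v := by
    intro v w
    simp [fderiv_clm_apply hDf (differentiableAt_const v)]
  rw [happly, happly]
  exact (hf.isSymmSndFDerivAt (by simp [minSmoothness_of_isRCLikeNormedField])) w v

end SecondDerivative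

theorem hasDerivAt_neg_log_neg {t : ℝ} (ht : t < 0) :
    HasDerivAt (fun s => -Real.log (-s)) (-t⁻¹) t :=
  ((Real.hasDerivAt_log (by linarith : -t ≠ 0)).comp t (hasDerivAt_neg t)).neg.congr_deriv
    (by rw [inv_neg]; ring)

theorem hasDerivAt_neg_inv {t : ℝ} (ht : t ≠ 0) : HasDerivAt (fun s => -s⁻¹) (t ^ 2)⁻¹ t :=
  (hasDerivAt_inv ht).neg.congr_deriv (neg_neg _)

section Wirtinger

variable {n : ℕ} {ρ : EuclideanSpace ℂ (Fin n) → ℝ} {z : EuclideanSpace ℂ (Fin n)}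

theorem wdzbar_eq_conj_wdz (k : Fin n) : wdzbar ρ z k = starRingEnd ℂ (wdz ρ z k) := by
  simp only [wdz, wdzbar, map_mul, map_sub, map_one, map_div₀, map_ofNat, conj_ofReal, conj_I]
  ring

theorem sum_sum_wdz_mul_wdzbar (w : Fin n → ℂ) :
    ∑ j, ∑ k, wdz ρ z j * wdzbar ρ z k * w j * starRingEnd ℂ (w k)
      = (‖∑ j, wdz ρ z j * w j‖ : ℂ) ^ 2 := by
  have hnorm : (∑ j, wdz ρ z j * w j) * starRingEnd ℂ (∑ k, wdz ρ z k * w k)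
      = (‖∑ j, wdz ρ z j * w j‖ : ℂ) ^ 2 := by
    rw [mul_conj, normSq_eq_norm_sq]; push_cast; rfl
  rw [← hnorm, map_sum, sum_mul_sum]
  refine sum_congr rfl fun j _ => sum_congr rfl fun k _ => ?_
  rw [map_mul, wdzbar_eq_conj_wdz]
  ring

theorem dzdzbar_of_D2_eq {u : EuclideanSpace ℂ (Fin n) → ℝ} {a b : ℝ}
    (h : ∀ v w, D2 u z v w = a * D2 ρ z v w + b * fderiv ℝ ρ z v * fderiv ℝ ρ z w)
    (j k : Fin n) :
    dzdzbar u z j k = a * dzdzbar ρ z j k + b * (wdz ρ z j * wdzbar ρ z k) := by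
  simp only [dzdzbar, h, wdz, wdzbar]
  push_cast
  ring_nf
  simp only [I_sq]
  ring

theorem Levi_of_D2_eq {u : EuclideanSpace ℂ (Fin n) → ℝ} {a b : ℝ}
    (h : ∀ v w, D2 u z v w = a * D2 ρ z v w + b * fderiv ℝ ρ z v * fderiv ℝ ρ z w)
    (w : Fin n → ℂ) :
    Levi u z w w = a * Levi ρ z w w + b * (‖∑ j, wdz ρ z j * w j‖ : ℂ) ^ 2 := by
  rw [← sum_sum_wdz_mul_wdzbar, Levi, Levi, mul_sum, mul_sum, ← sum_add_distrib]
  refine sum_congr rfl fun j _ => ?_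
  rw [mul_sum, mul_sum, ← sum_add_distrib]
  refine sum_congr rfl fun k _ => ?_
  rw [dzdzbar_of_D2_eq h]
  ring

theorem sum_sum_sub_wdz_mul_wdzbar (c : ℂ) (w : Fin n → ℂ) :
    ∑ j, ∑ k, (dzdzbar ρ z j k - c * wdz ρ z j * wdzbar ρ z k) * w j * starRingEnd ℂ (w k)
      = Levi ρ z w w - c * (‖∑ j, wdz ρ z j * w j‖ : ℂ) ^ 2 := by
  rw [← sum_sum_wdz_mul_wdzbar, Levi, mul_sum, ← sum_sub_distrib]
  refine sum_congr rfl fun j _ => ?_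
  rw [mul_sum, ← sum_sub_distrib]
  refine sum_congr rfl fun k _ => ?_
  ring

theorem conj_dzdzbar (hρ : ContDiffAt ℝ 2 ρ z) (j k : Fin n) :
    starRingEnd ℂ (dzdzbar ρ z j k) = dzdzbar ρ z k j := by
  have hsymm : ∀ v w, D2 ρ z v w = D2 ρ z w v := fderiv_fderiv_apply_comm hρ
  simp only [dzdzbar, map_mul, map_add, map_sub, map_one, map_div₀, map_ofNat, conj_ofReal,
    conj_I]
  rw [hsymm (sb n j) (sb n k), hsymm (I • sb n j) (I • sb n k), hsymm (sb n j) (I • sb n k),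
    hsymm (I • sb n j) (sb n k)]
  ring

theorem Levi_self_im_eq_zero (hρ : ContDiffAt ℝ 2 ρ z) (w : Fin n → ℂ) : (Levi ρ z w w).im = 0 := by
  refine conj_eq_iff_im.mp ?_
  simp only [Levi, map_sum, map_mul, conj_dzdzbar hρ, conj_conj]
  rw [sum_comm]
  exact sum_congr rfl fun _ _ => sum_congr rfl fun _ _ => by ring

end Wirtinger

theorem levi_of_neg_log_neg {n : ℕ}
    (ρ : EuclideanSpace ℂ (Fin n) → ℝ) (z : EuclideanSpace ℂ (Fin n))
    (hρ : ContDiffAt ℝ 2 ρ z) (hneg : ρ z < 0)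
    (u : EuclideanSpace ℂ (Fin n) → ℝ)
    (hu : u = fun z' => -Real.log (-(ρ z'))) :
    (∀ w : Fin n → ℂ,
      ((-(ρ z) : ℝ) : ℂ) * Levi u z w w
        = Levi ρ z w w
          - (1 / (ρ z : ℂ)) * (‖∑ j, wdz ρ z j * w j‖ : ℂ) ^ 2) ∧
    ((∀ᶠ z' in nhds z, ∀ w : Fin n → ℂ, 0 ≤ (Levi u z' w w).re) →
      ∀ w : Fin n → ℂ,
        0 ≤ (∑ j, ∑ k, (dzdzbar ρ z j k - (1 / (ρ z : ℂ)) * wdz ρ z j * wdzbar ρ z k)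
              * w j * (starRingEnd ℂ) (w k)).re ∧
        (∑ j, ∑ k, (dzdzbar ρ z j k - (1 / (ρ z : ℂ)) * wdz ρ z j * wdzbar ρ z k)
              * w j * (starRingEnd ℂ) (w k)).im = 0) := by
  subst hu
  have hD2 : ∀ v w, D2 (fun z' => -Real.log (-ρ z')) z v w
      = -(ρ z)⁻¹ * D2 ρ z v w + ((ρ z) ^ 2)⁻¹ * fderiv ℝ ρ z v * fderiv ℝ ρ z w :=
    fderiv_fderiv_apply_comp (φ := fun t => -Real.log (-t))
      ((gt_mem_nhds hneg).mono fun _ ht => hasDerivAt_neg_log_neg ht)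
      (hasDerivAt_neg_inv hneg.ne) hρ
  have hlevi : ∀ w : Fin n → ℂ,
      ((-(ρ z) : ℝ) : ℂ) * Levi (fun z' => -Real.log (-ρ z')) z w w
        = Levi ρ z w w - (1 / (ρ z : ℂ)) * (‖∑ j, wdz ρ z j * w j‖ : ℂ) ^ 2 := by
    intro w
    have hρ0 : (ρ z : ℂ) ≠ 0 := ofReal_ne_zero.mpr hneg.ne
    rw [Levi_of_D2_eq hD2]
    push_cast
    field_simp
    ring
  refine ⟨hlevi, fun hpsh w => ?_⟩
  rw [sum_sum_sub_wdz_mul_wdzbar]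
  constructor
  · rw [← hlevi, re_ofReal_mul]
    exact mul_nonneg (by linarith) (hpsh.self_of_nhds w)
  · have hreal : (1 / (ρ z : ℂ)) * (‖∑ j, wdz ρ z j * w j‖ : ℂ) ^ 2
        = ((1 / ρ z * ‖∑ j, wdz ρ z j * w j‖ ^ 2 : ℝ) : ℂ) := by
      push_cast; ring
    rw [hreal, sub_im, Levi_self_im_eq_zero hρ, ofReal_im, sub_zero]

end
end
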